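/- Let A be an invertible real symmetric n×n matrix and θ₂ a real n×n matrix such that A⁻¹ + θ₂ is invertible. For i, j = 1,…,n define operators on smooth functions f : ℝⁿ → ℂ by ∇_i f := ∂f/∂x_i and ∇_{n+j} f := −2π√-1 (((A⁻¹+θ₂)⁻¹) x)_j · f. Then A⁻¹ + θ₂ᵗ is invertible and for all p, q ∈ {1,…,2n} and all smooth f, [∇_p, ∇_q] f = −2π√-1 F_{pq} f, where F is the 2n×2n block matrix F = [[0, (A⁻¹+θ₂ᵗ)⁻¹],[−(A⁻¹+θ₂)⁻¹, 0]]. -/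

import Mathlib

open Matrix

/-- The connection components of the Type θ₂ Heisenberg module, acting on the
ℝⁿ-variable of the module: `∇_i = ∂/∂x_i` and
`∇_{n+j} = −2π i ((A⁻¹+θ₂)⁻¹ x)_j ·`. -/
noncomputable def connTheta2 {n : ℕ} (A θ₂ : Matrix (Fin n) (Fin n) ℝ) :
    Fin n ⊕ Fin n → ((Fin n → ℝ) → ℂ) → ((Fin n → ℝ) → ℂ)
  | Sum.inl i => fun f x => fderiv ℝ f x (Pi.single i 1)
  | Sum.inr j => fun f x =>
      -2 * (Real.pi : ℂ) * Complex.I *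
        (((((A⁻¹ + θ₂)⁻¹).mulVec x) j : ℝ) : ℂ) * f x

/-- CLM `x ↦ ((M *ᵥ x) j : ℂ)`. -/
noncomputable def mvCLM {n : ℕ} (M : Matrix (Fin n) (Fin n) ℝ) (j : Fin n) :
    (Fin n → ℝ) →L[ℝ] ℂ :=
  Complex.ofRealCLM.comp
    (LinearMap.toContinuousLinearMap ((LinearMap.proj j).comp M.mulVecLin))

lemma mvCLM_apply {n : ℕ} (M : Matrix (Fin n) (Fin n) ℝ) (j : Fin n)
    (x : Fin n → ℝ) : mvCLM M j x = ((M.mulVec x j : ℝ) : ℂ) := rfl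

lemma fderiv_connR {n : ℕ} (M : Matrix (Fin n) (Fin n) ℝ) (j : Fin n)
    (f : (Fin n → ℝ) → ℂ) (x w : Fin n → ℝ) (hf : DifferentiableAt ℝ f x) :
    fderiv ℝ (fun y => -2 * (Real.pi : ℂ) * Complex.I * ((M.mulVec y j : ℝ) : ℂ) * f y) x w
      = -2 * (Real.pi : ℂ) * Complex.I * ((M.mulVec w j : ℝ) : ℂ) * f x
        + -2 * (Real.pi : ℂ) * Complex.I * ((M.mulVec x j : ℝ) : ℂ) * fderiv ℝ f x w := by
  have h1 : HasFDerivAt (fun y => -2 * (Real.pi : ℂ) * Complex.I * ((M.mulVec y j : ℝ) : ℂ))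
      ((-2 * (Real.pi : ℂ) * Complex.I) • mvCLM M j) x :=
    (mvCLM M j).hasFDerivAt.const_mul _
  have h2 : fderiv ℝ (fun y => -2 * (Real.pi : ℂ) * Complex.I * ((M.mulVec y j : ℝ) : ℂ) * f y) x = _ :=
    (h1.mul hf.hasFDerivAt).fderiv
  rw [h2]
  simp [mvCLM_apply]
  ring

lemma fderiv_eval {n : ℕ} (f : (Fin n → ℝ) → ℂ) (hf : ContDiff ℝ (⊤ : ℕ∞) f)
    (v x w : Fin n → ℝ) :
    fderiv ℝ (fun y => fderiv ℝ f y v) x w = fderiv ℝ (fderiv ℝ f) x w v := by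
  have hd : DifferentiableAt ℝ (fderiv ℝ f) x :=
    ((hf.fderiv_right (m := 1) (WithTop.coe_le_coe.mpr le_top)).differentiable one_ne_zero) x
  rw [fderiv_clm_apply hd (differentiableAt_const v)]
  simp

/-- The connection of the Type θ₂ Heisenberg module has constant
curvature `[∇_p, ∇_q] = −2π i F_{pq}` with
`F = [[0, (A⁻¹+θ₂ᵗ)⁻¹],[−(A⁻¹+θ₂)⁻¹, 0]]`. -/
theorem typeTheta2_constant_curvature {n : ℕ} (A θ₂ : Matrix (Fin n) (Fin n) ℝ)
    (hA : A.IsSymm) (hAinv : IsUnit A.det) (hinv : IsUnit (A⁻¹ + θ₂).det)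
    (F : Matrix (Fin n ⊕ Fin n) (Fin n ⊕ Fin n) ℝ)
    (hF : F = fromBlocks 0 (A⁻¹ + θ₂ᵀ)⁻¹ (-(A⁻¹ + θ₂)⁻¹) 0) :
    IsUnit (A⁻¹ + θ₂ᵀ).det ∧
    ∀ (p q : Fin n ⊕ Fin n) (f : (Fin n → ℝ) → ℂ), ContDiff ℝ (⊤ : ℕ∞) f →
      ∀ x : Fin n → ℝ,
        connTheta2 A θ₂ p (connTheta2 A θ₂ q f) x
          - connTheta2 A θ₂ q (connTheta2 A θ₂ p f) x
        = -2 * (Real.pi : ℂ) * Complex.I * ((F p q : ℝ) : ℂ) * f x := by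
  have hAi : (A⁻¹)ᵀ = A⁻¹ := by
    rw [Matrix.transpose_nonsing_inv, hA.eq]
  have hT : A⁻¹ + θ₂ᵀ = (A⁻¹ + θ₂)ᵀ := by
    rw [Matrix.transpose_add, hAi]
  have hdet : IsUnit (A⁻¹ + θ₂ᵀ).det := by
    rw [hT, Matrix.det_transpose]; exact hinv
  have hMT : (A⁻¹ + θ₂ᵀ)⁻¹ = ((A⁻¹ + θ₂)⁻¹)ᵀ := by
    rw [hT, ← Matrix.transpose_nonsing_inv]
  refine ⟨hdet, ?_⟩
  set M := (A⁻¹ + θ₂)⁻¹ with hM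
  intro p q f hf x
  have hfd : Differentiable ℝ f := hf.differentiable (by simp)
  match p, q with
  | Sum.inl i, Sum.inl i' =>
    have hsymm : IsSymmSndFDerivAt ℝ f x := by
      apply hf.contDiffAt.isSymmSndFDerivAt
      rw [minSmoothness_of_isRCLikeNormedField]
      exact WithTop.coe_le_coe.mpr le_top
    simp only [connTheta2, hF, fromBlocks_apply₁₁, Matrix.zero_apply]
    rw [fderiv_eval f hf _ x _, fderiv_eval f hf _ x _,
      hsymm.eq (Pi.single i 1) (Pi.single i' 1)]
    simp
  | Sum.inl i, Sum.inr j =>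
    simp only [connTheta2, hF, fromBlocks_apply₁₂]
    rw [fderiv_connR M j f x (Pi.single i 1) (hfd x)]
    rw [hMT]
    simp [Matrix.mulVec_single, ← hM]
  | Sum.inr j, Sum.inl i =>
    simp only [connTheta2, hF, fromBlocks_apply₂₁, Matrix.neg_apply]
    rw [fderiv_connR M j f x (Pi.single i 1) (hfd x)]
    simp [Matrix.mulVec_single, ← hM]
  | Sum.inr j, Sum.inr j' =>
    simp only [connTheta2, hF, fromBlocks_apply₂₂, Matrix.zero_apply]
    push_cast
    ring
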